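/- Fix a negative token v' ≠ y and regard its hard-negative weight as a function of the temperature, W(t) = exp(p(v')/t) / Σ_{u ∈ V, u ≠ y} exp(p(u)/t) for t > 0. If p(v') > ( Σ_{u ≠ y} exp(p(u)/τ)·p(u) ) / ( Σ_{u ≠ y} exp(p(u)/τ) ), i.e. the score of v' exceeds the weight-averaged negative score at temperature τ, then the derivative of W at τ is strictly negative; hence decreasing the temperature strictly increases the weight placed on such hard negative samples. -/

import Mathlib

open Real Finset

/-! Writing `Z(t) = ∑ exp (p u / t)`, the quotient rule gives
`W'(τ) = W(τ) / τ² · (𝔼_τ[p] - p v')`, where `𝔼_τ[p] = (∑ exp (p u / τ) * p u) / Z(τ)` is the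
softmax average of the scores; the sign is therefore that of `𝔼_τ[p] - p v'`. -/

theorem hasDerivAt_exp_div {a τ : ℝ} (hτ : τ ≠ 0) :
    HasDerivAt (fun t : ℝ => exp (a / t)) (-(exp (a / τ) * a) / τ ^ 2) τ := by
  have h := ((hasDerivAt_inv hτ).const_mul a).exp
  convert h using 1
  · simp only [div_eq_mul_inv]
  · field_simp

theorem hasDerivAt_sum_exp_div {ι : Type*} (s : Finset ι) (f : ι → ℝ) {τ : ℝ} (hτ : τ ≠ 0) :
    HasDerivAt (fun t : ℝ => ∑ u ∈ s, exp (f u / t))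
      (-(∑ u ∈ s, exp (f u / τ) * f u) / τ ^ 2) τ := by
  have h := HasDerivAt.fun_sum (u := s) fun u _ => hasDerivAt_exp_div (a := f u) hτ
  rwa [← sum_div, sum_neg_distrib] at h

theorem hasDerivAt_exp_div_div_sum_exp_div {ι : Type*} {s : Finset ι} (hs : s.Nonempty)
    (f : ι → ℝ) (i : ι) {τ : ℝ} (hτ : τ ≠ 0) :
    HasDerivAt (fun t : ℝ => exp (f i / t) / ∑ u ∈ s, exp (f u / t))
      (exp (f i / τ) / (∑ u ∈ s, exp (f u / τ)) / τ ^ 2 *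
        ((∑ u ∈ s, exp (f u / τ) * f u) / (∑ u ∈ s, exp (f u / τ)) - f i)) τ := by
  have hZ : (∑ u ∈ s, exp (f u / τ)) ≠ 0 :=
    (sum_pos (fun u _ => exp_pos _) hs).ne'
  refine ((hasDerivAt_exp_div hτ).fun_div (hasDerivAt_sum_exp_div s f hτ) hZ).congr_deriv ?_
  field_simp
  ring

theorem hard_negative_weight_deriv_neg_general
    {V : Type*} [Fintype V] [DecidableEq V]
    (p : V → ℝ) (y : V) (τ : ℝ) (hτ : 0 < τ) (v' : V) (hv' : v' ≠ y)
    (hhard :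
      (∑ u ∈ Finset.univ.filter (· ≠ y), Real.exp (p u / τ) * p u) /
          (∑ u ∈ Finset.univ.filter (· ≠ y), Real.exp (p u / τ)) < p v') :
    deriv
      (fun t : ℝ =>
        Real.exp (p v' / t) / (∑ u ∈ Finset.univ.filter (· ≠ y), Real.exp (p u / t)))
      τ < 0 := by
  have hs : (univ.filter (· ≠ y)).Nonempty := ⟨v', by simpa using hv'⟩
  rw [(hasDerivAt_exp_div_div_sum_exp_div hs p v' hτ.ne').deriv]
  have hZ : 0 < ∑ u ∈ univ.filter (· ≠ y), exp (p u / τ) := sum_pos (fun u _ => exp_pos _) hs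
  exact mul_neg_of_pos_of_neg (by positivity) (sub_neg.mpr hhard)

/-- If the score of the fixed negative token `v' ≠ y` strictly exceeds the
weight-averaged negative score at temperature `τ`, then the derivative (in the
temperature) of its hard-negative weight
`W t = exp(p v' / t) / ∑_{u ≠ y} exp(p u / t)` at `τ` is strictly negative. -/
theorem hard_negative_weight_deriv_neg
    {V : Type*} [Fintype V] [DecidableEq V] (hV : 1 < Fintype.card V)
    (p : V → ℝ) (y : V) (τ : ℝ) (hτ : 0 < τ) (v' : V) (hv' : v' ≠ y)
    (hhard :
      (∑ u ∈ Finset.univ.filter (· ≠ y), Real.exp (p u / τ) * p u) /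
          (∑ u ∈ Finset.univ.filter (· ≠ y), Real.exp (p u / τ)) < p v') :
    deriv
      (fun t : ℝ =>
        Real.exp (p v' / t) / (∑ u ∈ Finset.univ.filter (· ≠ y), Real.exp (p u / t)))
      τ < 0 :=
  hard_negative_weight_deriv_neg_general p y τ hτ v' hv' hhard
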